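/- Let X be a real n×d matrix of full column rank d and x ∈ ℝ^d, and define F(v) = xᵀ (Xᵀ diag(v) X)⁻¹ x for v ∈ (0,∞)^n. Then F is entrywise nonincreasing and convex on (0,∞)^n: (i) if 0 < u_i ≤ v_i for all i then F(v) ≤ F(u); (ii) for all u, v ∈ (0,∞)^n and λ ∈ [0,1], F(λu + (1−λ)v) ≤ λF(u) + (1−λ)F(v). -/

import Mathlib

open Matrix Set

section aux

variable {n d : ℕ} (X : Matrix (Fin n) (Fin d) ℝ)

lemma aux_inj (hX : X.rank = d) {z : Fin d → ℝ} (hz : X.mulVec z = 0) : z = 0 := by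
  have hker : LinearMap.ker X.mulVecLin = ⊥ := by
    have h := LinearMap.finrank_range_add_finrank_ker X.mulVecLin
    rw [Matrix.rank] at hX
    rw [hX] at h
    simp only [Module.finrank_pi, Fintype.card_fin] at h
    have : Module.finrank ℝ (LinearMap.ker X.mulVecLin) = 0 := by omega
    exact Submodule.finrank_eq_zero.mp this
  have : z ∈ LinearMap.ker X.mulVecLin := by simpa [Matrix.mulVecLin_apply] using hz
  simpa [hker] using this

lemma aux_quad (v : Fin n → ℝ) (z : Fin d → ℝ) :
    z ⬝ᵥ (Xᵀ * Matrix.diagonal v * X).mulVec z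
      = ∑ i, v i * (X.mulVec z i) ^ 2 := by
  rw [← Matrix.mulVec_mulVec, ← Matrix.mulVec_mulVec, Matrix.dotProduct_mulVec,
    Matrix.vecMul_transpose]
  simp [Matrix.mulVec_diagonal, dotProduct]
  exact Finset.sum_congr rfl fun i _ => by ring

lemma aux_posdef (hX : X.rank = d) {v : Fin n → ℝ} (hv : ∀ i, 0 < v i) :
    (Xᵀ * Matrix.diagonal v * X).PosDef := by
  refine Matrix.PosDef.of_dotProduct_mulVec_pos ?_ ?_
  · have : (Matrix.diagonal v).IsHermitian := Matrix.isHermitian_diagonal _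
    have h2 := Matrix.isHermitian_conjTranspose_mul_mul X this
    simpa [Matrix.conjTranspose_eq_transpose_of_trivial] using h2
  · intro z hz
    have hXz : X.mulVec z ≠ 0 := fun h => hz (aux_inj X hX h)
    have : (0:ℝ) < ∑ i, v i * (X.mulVec z i) ^ 2 := by
      obtain ⟨i, hi⟩ := Function.ne_iff.mp hXz
      refine Finset.sum_pos' (fun j _ => mul_nonneg (hv j).le (sq_nonneg _)) ⟨i, Finset.mem_univ i, ?_⟩
      have hne : X.mulVec z i ≠ 0 := by simpa using hi
      exact mul_pos (hv i) ((sq_nonneg _).lt_of_ne (Ne.symm (pow_ne_zero 2 hne)))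
    simpa [aux_quad, star_trivial] using this

end aux

section key

variable {n d : ℕ} {X : Matrix (Fin n) (Fin d) ℝ}

lemma aux_key (x : Fin d → ℝ) {A : Matrix (Fin d) (Fin d) ℝ} (hA : A.PosDef)
    (z : Fin d → ℝ) :
    2 * (x ⬝ᵥ z) - z ⬝ᵥ A.mulVec z ≤ x ⬝ᵥ A⁻¹.mulVec x := by
  have hdet : IsUnit A.det := hA.det_pos.ne'.isUnit
  set y := A⁻¹.mulVec x with hy
  have hAy : A.mulVec y = x := by
    rw [hy, Matrix.mulVec_mulVec, Matrix.mul_nonsing_inv A hdet, Matrix.one_mulVec]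
  have hAt : Aᵀ = A := by
    have := hA.isHermitian
    simpa [Matrix.IsHermitian, Matrix.conjTranspose_eq_transpose_of_trivial] using this
  have hsym : ∀ a b : Fin d → ℝ, a ⬝ᵥ A.mulVec b = b ⬝ᵥ A.mulVec a := by
    intro a b
    rw [Matrix.dotProduct_mulVec]
    nth_rewrite 1 [← hAt]
    rw [Matrix.vecMul_transpose, dotProduct_comm]
  have h0 : (0:ℝ) ≤ (z - y) ⬝ᵥ A.mulVec (z - y) := by
    by_cases hzy : z - y = 0
    · simp [hzy]
    · exact le_of_lt (by simpa [star_trivial] using hA.dotProduct_mulVec_pos hzy)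
  have hexp : (z - y) ⬝ᵥ A.mulVec (z - y)
      = z ⬝ᵥ A.mulVec z - z ⬝ᵥ A.mulVec y - y ⬝ᵥ A.mulVec z + y ⬝ᵥ A.mulVec y := by
    rw [Matrix.mulVec_sub, sub_dotProduct, dotProduct_sub, dotProduct_sub]
    ring
  have h1 : z ⬝ᵥ A.mulVec y = x ⬝ᵥ z := by rw [hAy, dotProduct_comm]
  have h2 : y ⬝ᵥ A.mulVec z = x ⬝ᵥ z := by rw [hsym, h1]
  have h3 : y ⬝ᵥ A.mulVec y = x ⬝ᵥ y := by rw [hAy, dotProduct_comm]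
  rw [hexp, h1, h2, h3] at h0
  linarith

lemma aux_F_eq (x : Fin d → ℝ) {A : Matrix (Fin d) (Fin d) ℝ} (hA : A.PosDef) :
    x ⬝ᵥ A⁻¹.mulVec x
      = 2 * (x ⬝ᵥ A⁻¹.mulVec x) - (A⁻¹.mulVec x) ⬝ᵥ A.mulVec (A⁻¹.mulVec x) := by
  have hdet : IsUnit A.det := hA.det_pos.ne'.isUnit
  have hAy : A.mulVec (A⁻¹.mulVec x) = x := by
    rw [Matrix.mulVec_mulVec, Matrix.mul_nonsing_inv A hdet, Matrix.one_mulVec]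
  rw [hAy, dotProduct_comm (A⁻¹.mulVec x) x]
  ring

end key

/-- `v ↦ xᵀ (Xᵀ diag(v) X)⁻¹ x` is entrywise nonincreasing and
convex on `(0,∞)ⁿ`. -/
theorem stmt_3 (n d : ℕ) (X : Matrix (Fin n) (Fin d) ℝ) (hX : X.rank = d)
    (x : Fin d → ℝ) (F : (Fin n → ℝ) → ℝ)
    (hF : ∀ v : Fin n → ℝ,
      F v = x ⬝ᵥ ((Xᵀ * Matrix.diagonal v * X)⁻¹).mulVec x) :
    (∀ u v : Fin n → ℝ, (∀ i, 0 < u i) → (∀ i, u i ≤ v i) → F v ≤ F u) ∧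
    (∀ u v : Fin n → ℝ, (∀ i, 0 < u i) → (∀ i, 0 < v i) →
      ∀ l ∈ Icc (0:ℝ) 1, F (l • u + (1 - l) • v) ≤ l * F u + (1 - l) * F v) := by
  constructor
  · intro u v hu huv
    have hv : ∀ i, 0 < v i := fun i => lt_of_lt_of_le (hu i) (huv i)
    have hAv := aux_posdef X hX hv
    have hAu := aux_posdef X hX hu
    set y := ((Xᵀ * Matrix.diagonal v * X)⁻¹).mulVec x with hy
    have h1 : F v = 2 * (x ⬝ᵥ y) - y ⬝ᵥ (Xᵀ * Matrix.diagonal v * X).mulVec y := by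
      rw [hF v]; exact aux_F_eq x hAv
    have h2 : y ⬝ᵥ (Xᵀ * Matrix.diagonal u * X).mulVec y
        ≤ y ⬝ᵥ (Xᵀ * Matrix.diagonal v * X).mulVec y := by
      rw [aux_quad, aux_quad]
      exact Finset.sum_le_sum fun i _ =>
        mul_le_mul_of_nonneg_right (huv i) (sq_nonneg _)
    have h3 := aux_key x hAu y
    rw [hF u]
    linarith
  · intro u v hu hv l hl
    obtain ⟨hl0, hl1⟩ := hl
    set w := l • u + (1 - l) • v with hw
    have hwpos : ∀ i, 0 < w i := by
      intro i
      simp only [hw, Pi.add_apply, Pi.smul_apply, smul_eq_mul]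
      rcases eq_or_lt_of_le hl0 with h | h
      · simp [← h, hv i]
      · have : 0 ≤ (1 - l) * v i := mul_nonneg (by linarith) (hv i).le
        nlinarith [mul_pos h (hu i)]
    have hAw := aux_posdef X hX hwpos
    have hAu := aux_posdef X hX hu
    have hAv := aux_posdef X hX hv
    set y := ((Xᵀ * Matrix.diagonal w * X)⁻¹).mulVec x with hy
    have h1 : F w = 2 * (x ⬝ᵥ y) - y ⬝ᵥ (Xᵀ * Matrix.diagonal w * X).mulVec y := by
      rw [hF w]; exact aux_F_eq x hAw
    have hlin : y ⬝ᵥ (Xᵀ * Matrix.diagonal w * X).mulVec y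
        = l * (y ⬝ᵥ (Xᵀ * Matrix.diagonal u * X).mulVec y)
          + (1 - l) * (y ⬝ᵥ (Xᵀ * Matrix.diagonal v * X).mulVec y) := by
      rw [aux_quad, aux_quad, aux_quad, Finset.mul_sum, Finset.mul_sum,
        ← Finset.sum_add_distrib]
      refine Finset.sum_congr rfl fun i _ => ?_
      simp only [hw, Pi.add_apply, Pi.smul_apply, smul_eq_mul]
      ring
    have h2 := aux_key x hAu y
    have h3 := aux_key x hAv y
    have h4 : l * (2 * (x ⬝ᵥ y) - y ⬝ᵥ (Xᵀ * Matrix.diagonal u * X).mulVec y)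
        ≤ l * F u := mul_le_mul_of_nonneg_left (by rw [hF u]; exact h2) hl0
    have h5 : (1 - l) * (2 * (x ⬝ᵥ y) - y ⬝ᵥ (Xᵀ * Matrix.diagonal v * X).mulVec y)
        ≤ (1 - l) * F v := mul_le_mul_of_nonneg_left (by rw [hF v]; exact h3) (by linarith)
    have : F w = l * (2 * (x ⬝ᵥ y) - y ⬝ᵥ (Xᵀ * Matrix.diagonal u * X).mulVec y)
        + (1 - l) * (2 * (x ⬝ᵥ y) - y ⬝ᵥ (Xᵀ * Matrix.diagonal v * X).mulVec y) := by
      rw [h1, hlin]; ring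
    linarith
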